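/- Let k be a non-negative integer and let τ be a locally compact Hausdorff shift-continuous topology on B⁰(B_k). The set B = {(n,(0,0),m) : n, m non-negative integers} ∪ {0*} is a closed subsemigroup of (B⁰(B_k), τ), and B is isomorphic as a semigroup to the bicyclic monoid with an adjoined zero, with 0* corresponding to the zero. -/

import Mathlib

open Ordinal Set Topology

noncomputable section

/-- The `α`-bicyclic monoid: pairs of ordinals below `ω ^ α`. -/
def Bicyclic (α : Ordinal) : Type 1 :=
  {p : Ordinal × Ordinal // p.1 < ω ^ α ∧ p.2 < ω ^ α}

namespace Bicyclic

variable {α : Ordinal}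

def mk (a b : Ordinal) (ha : a < ω ^ α) (hb : b < ω ^ α) : Bicyclic α :=
  ⟨(a, b), ha, hb⟩

instance : Mul (Bicyclic α) :=
  ⟨fun x y =>
    if x.val.2 ≤ y.val.1 then
      ⟨(x.val.1 + (y.val.1 - x.val.2), y.val.2),
        (principal_add_omega0_opow α) x.2.1
          (lt_of_le_of_lt (Ordinal.sub_le_self _ _) y.2.1),
        y.2.2⟩
    else
      ⟨(x.val.1, y.val.2 + (x.val.2 - y.val.1)),
        x.2.1,
        (principal_add_omega0_opow α) y.2.2
          (lt_of_le_of_lt (Ordinal.sub_le_self _ _) x.2.2)⟩⟩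

instance : One (Bicyclic α) :=
  ⟨⟨(0, 0), opow_pos α omega0_pos, opow_pos α omega0_pos⟩⟩

end Bicyclic

/-- The Bruck extension of a semigroup `S`. -/
def Bruck (S : Type*) : Type _ := ℕ × S × ℕ

def Bruck.mk {S : Type*} (n : ℕ) (s : S) (m : ℕ) : Bruck S := (n, s, m)

instance {S : Type*} [Mul S] : Mul (Bruck S) :=
  ⟨fun x y =>
    if x.2.2 < y.1 then (x.1 + y.1 - x.2.2, y.2.1, y.2.2)
    else if y.1 < x.2.2 then (x.1, x.2.1, y.2.2 + x.2.2 - y.1)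
    else (x.1, x.2.1 * y.2.1, y.2.2)⟩

/-- The Bruck extension of `S` with an adjoined (absorbing) zero `0*`. -/
abbrev BruckZero (S : Type*) := WithZero (Bruck S)

/-- The box `[n,m]` in the Bruck extension with zero. -/
def box (S : Type*) (n m : ℕ) : Set (BruckZero S) :=
  {x | ∃ s : S, x = ↑(Bruck.mk n s m)}

/-- A topology on `X` is shift-continuous if all two-sided shifts `x ↦ a * x * b`
are continuous. -/
def ShiftContinuous (X : Type*) [Mul X] [TopologicalSpace X] : Prop :=
  ∀ a b : X, Continuous fun x => a * x * b

/-- The bicyclic monoid on `ℕ × ℕ`. -/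
def BicyclicNat : Type := ℕ × ℕ

instance : Mul BicyclicNat :=
  ⟨fun x y => if x.2 ≤ y.1 then (x.1 + y.1 - x.2, y.2) else (x.1, y.2 + x.2 - y.1)⟩

/-! The idempotent `(n, 1, n)` of the Bruck extension fixes, by left multiplication, every
`(m, s, l)` with `n ≤ m`, and moves every `(c, t, d)` with `c < n`; symmetrically on the right.
In a Hausdorff space the points moved by a continuous map form an open set, so a point `(c, t, d)`
in the closure of `B` lies in the closure of the points of `B` moved by both shifts
`x ↦ (c + 1, 1, c + 1) * x` and `x ↦ x * (d + 1, 1, d + 1)`. Those are the finitely many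
`(n, 1, m)` with `n ≤ c` and `m ≤ d`, so `(c, t, d)` is one of them. -/

lemma ShiftContinuous.continuous_mul_left {X : Type*} [MulOneClass X] [TopologicalSpace X]
    (h : ShiftContinuous X) (a : X) : Continuous (a * ·) := by
  simpa using h a 1

lemma ShiftContinuous.continuous_mul_right {X : Type*} [MulOneClass X] [TopologicalSpace X]
    (h : ShiftContinuous X) (b : X) : Continuous (· * b) := by
  simpa using h 1 b

lemma mem_closure_inter_setOf_ne {X : Type*} [TopologicalSpace X] [T2Space X] {g : X → X}
    (hg : Continuous g) {s : Set X} {w : X} (hw : w ∈ closure s) (hgw : g w ≠ w) :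
    w ∈ closure (s ∩ {y | g y ≠ y}) :=
  (isOpen_ne_fun hg continuous_id).closure_inter ⟨hw, hgw⟩

namespace Bicyclic

variable {α : Ordinal}

lemma val_mul (x y : Bicyclic α) :
    (x * y).val =
      if x.val.2 ≤ y.val.1 then (x.val.1 + (y.val.1 - x.val.2), y.val.2)
      else (x.val.1, y.val.2 + (x.val.2 - y.val.1)) :=
  apply_ite Subtype.val _ _ _

instance : MulOneClass (Bicyclic α) where
  one_mul t := by
    apply Subtype.ext
    simp [val_mul, show (1 : Bicyclic α).val = (0, 0) from rfl]
  mul_one t := by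
    apply Subtype.ext
    rw [val_mul, show (1 : Bicyclic α).val = (0, 0) from rfl]
    split_ifs with h
    · have h0 : t.val.2 = 0 := nonpos_iff_eq_zero.mp h
      ext <;> simp [h0]
    · simp

end Bicyclic

lemma BicyclicNat.mul_def (p q : BicyclicNat) :
    p * q = (if p.2 ≤ q.1 then (p.1 + q.1 - p.2, q.2) else (p.1, q.2 + p.2 - q.1) : ℕ × ℕ) :=
  rfl

namespace Bruck

variable {S : Type*}

lemma mk_mul_mk [Mul S] (n : ℕ) (s : S) (m c : ℕ) (t : S) (d : ℕ) :
    mk n s m * mk c t d =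
      if m < c then mk (n + c - m) t d
      else if c < m then mk n s (d + m - c)
      else mk n (s * t) d := rfl

lemma mk_inj {n m n' m' : ℕ} {s s' : S} : mk n s m = mk n' s' m' ↔ n = n' ∧ s = s' ∧ m = m' := by
  change ((n, s, m) : ℕ × S × ℕ) = (n', s', m') ↔ _
  simp

section MulOneClass

variable [MulOneClass S]

lemma mk_one_self_mul_mk_of_le {n m : ℕ} (h : n ≤ m) (s : S) (l : ℕ) :
    mk n 1 n * mk m s l = mk m s l := by
  rcases h.lt_or_eq with h | rfl
  · rw [mk_mul_mk, if_pos h, Nat.add_sub_cancel_left]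
  · rw [mk_mul_mk, if_neg (lt_irrefl n), if_neg (lt_irrefl n), one_mul]

lemma mk_mul_mk_one_self_of_le {n l : ℕ} (h : n ≤ l) (m : ℕ) (s : S) :
    mk m s l * mk n 1 n = mk m s l := by
  rcases h.lt_or_eq with h | rfl
  · rw [mk_mul_mk, if_neg (by omega), if_pos h, Nat.add_sub_cancel_left]
  · rw [mk_mul_mk, if_neg (lt_irrefl n), if_neg (lt_irrefl n), mul_one]

instance : MulOneClass (Bruck S) where
  one := mk 0 1 0
  one_mul := fun ⟨m, s, l⟩ => mk_one_self_mul_mk_of_le (Nat.zero_le m) s l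
  mul_one := fun ⟨m, s, l⟩ => mk_mul_mk_one_self_of_le (Nat.zero_le l) m s

end MulOneClass

lemma mk_self_mul_mk_of_lt [Mul S] {c n : ℕ} (h : c < n) (s t : S) (d : ℕ) :
    mk n s n * mk c t d = mk n s (d + n - c) := by
  rw [mk_mul_mk, if_neg (by omega), if_pos h]

lemma mk_mul_mk_self_of_lt [Mul S] {d n : ℕ} (h : d < n) (c : ℕ) (s t : S) :
    mk c t d * mk n s n = mk (c + n - d) s n := by
  rw [mk_mul_mk, if_pos h]

variable (S) in
def ofBicyclicNat [One S] (p : BicyclicNat) : Bruck S := mk p.1 1 p.2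

lemma ofBicyclicNat_injective [One S] : Function.Injective (ofBicyclicNat S) :=
  fun _ _ h => Prod.ext (mk_inj.mp h).1 (mk_inj.mp h).2.2

lemma ofBicyclicNat_mul [MulOneClass S] (p q : BicyclicNat) :
    ofBicyclicNat S (p * q) = ofBicyclicNat S p * ofBicyclicNat S q := by
  rw [ofBicyclicNat, ofBicyclicNat, ofBicyclicNat, BicyclicNat.mul_def, mk_mul_mk]
  rcases lt_trichotomy p.2 q.1 with h | h | h
  · rw [if_pos h.le, if_pos h]
  · rw [if_pos h.le, if_neg h.not_lt, if_neg h.symm.not_lt, one_mul, h, Nat.add_sub_cancel]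
  · rw [if_neg h.not_ge, if_neg (lt_asymm h), if_pos h]

end Bruck

section BicyclicCopy

open Bruck

variable (S : Type*)

def bicyclicCopy [One S] : Set (BruckZero S) :=
  {x | x = 0 ∨ ∃ n m : ℕ, x = ↑(Bruck.mk n (1 : S) m)}

def bicyclicEmbedding [MulOneClass S] : WithZero BicyclicNat →ₙ* BruckZero S where
  toFun := WithZero.map (ofBicyclicNat S)
  map_mul' x y := by
    induction x using WithZero.recZeroCoe <;> induction y using WithZero.recZeroCoe <;>
      simp [← WithZero.coe_mul, ofBicyclicNat_mul]

lemma range_bicyclicEmbedding [MulOneClass S] :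
    range (bicyclicEmbedding S) = bicyclicCopy S := by
  ext x
  constructor
  · rintro ⟨y, rfl⟩
    induction y using WithZero.recZeroCoe with
    | zero => exact Or.inl rfl
    | coe p => exact Or.inr ⟨p.1, p.2, rfl⟩
  · rintro (rfl | ⟨n, m, rfl⟩)
    · exact ⟨0, rfl⟩
    · exact ⟨↑(show BicyclicNat from (n, m)), rfl⟩

lemma bicyclicEmbedding_injective [MulOneClass S] : Function.Injective (bicyclicEmbedding S) :=
  Option.map_injective ofBicyclicNat_injective

variable {S}

lemma mul_mem_bicyclicCopy [MulOneClass S] {x y : BruckZero S} (hx : x ∈ bicyclicCopy S)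
    (hy : y ∈ bicyclicCopy S) : x * y ∈ bicyclicCopy S := by
  rw [← range_bicyclicEmbedding, ← MulHom.coe_srange] at *
  exact mul_mem hx hy

theorem isClosed_bicyclicCopy [MulOneClass S] [TopologicalSpace (BruckZero S)]
    [T2Space (BruckZero S)] (hτ : ShiftContinuous (BruckZero S)) :
    IsClosed (bicyclicCopy S) := by
  refine isClosed_of_closure_subset fun w hw => ?_
  induction w using WithZero.recZeroCoe with
  | zero => exact Or.inl rfl
  | coe v =>
  obtain ⟨c, t, d⟩ := v
  let a : BruckZero S := ↑(mk (c + 1) (1 : S) (c + 1))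
  let b : BruckZero S := ↑(mk (d + 1) (1 : S) (d + 1))
  have ha : a * ↑(mk c t d) ≠ ↑(mk c t d) := by
    rw [← WithZero.coe_mul, mk_self_mul_mk_of_lt c.lt_succ_self, Ne, WithZero.coe_inj, mk_inj]
    exact fun h => c.succ_ne_self h.1
  have hb : ↑(mk c t d) * b ≠ ↑(mk c t d) := by
    rw [← WithZero.coe_mul, mk_mul_mk_self_of_lt d.lt_succ_self, Ne, WithZero.coe_inj, mk_inj]
    exact fun h => d.succ_ne_self h.2.2
  have hw' := mem_closure_inter_setOf_ne (hτ.continuous_mul_right b)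
    (mem_closure_inter_setOf_ne (hτ.continuous_mul_left a) hw ha) hb
  have hmoved : bicyclicCopy S ∩ {y | a * y ≠ y} ∩ {y | y * b ≠ y} ⊆
      (fun p : ℕ × ℕ => (↑(mk p.1 (1 : S) p.2) : BruckZero S)) '' (Iic c ×ˢ Iic d) := by
    rintro _ ⟨⟨rfl | ⟨n, m, rfl⟩, hay⟩, hyb⟩
    · exact absurd (mul_zero a) hay
    refine ⟨(n, m), ⟨mem_Iic.mpr <| not_lt.mp fun hn => hay ?_,
      mem_Iic.mpr <| not_lt.mp fun hm => hyb ?_⟩, rfl⟩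
    · rw [← WithZero.coe_mul, mk_one_self_mul_mk_of_le hn]
    · rw [← WithZero.coe_mul, mk_mul_mk_one_self_of_le hm]
  obtain ⟨p, -, hp⟩ := closure_minimal hmoved
    (((finite_Iic c).prod (finite_Iic d)).image _).isClosed hw'
  exact Or.inr ⟨p.1, p.2, hp.symm⟩
end BicyclicCopy

theorem closed_copy_of_bicyclic_with_zero_general (k : ℕ)
    [TopologicalSpace (BruckZero (Bicyclic k))] [T2Space (BruckZero (Bicyclic k))]
    (hτ : ShiftContinuous (BruckZero (Bicyclic k))) :
    IsClosed {x : BruckZero (Bicyclic k) |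
        x = 0 ∨ ∃ n m : ℕ, x = ↑(Bruck.mk n (1 : Bicyclic k) m)} ∧
    (∀ x ∈ {x : BruckZero (Bicyclic k) |
        x = 0 ∨ ∃ n m : ℕ, x = ↑(Bruck.mk n (1 : Bicyclic k) m)},
      ∀ y ∈ {x : BruckZero (Bicyclic k) |
        x = 0 ∨ ∃ n m : ℕ, x = ↑(Bruck.mk n (1 : Bicyclic k) m)},
      x * y ∈ {x : BruckZero (Bicyclic k) |
        x = 0 ∨ ∃ n m : ℕ, x = ↑(Bruck.mk n (1 : Bicyclic k) m)}) ∧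
    ∃ f : WithZero BicyclicNat → BruckZero (Bicyclic k),
      Function.Injective f ∧
      Set.range f = {x : BruckZero (Bicyclic k) |
        x = 0 ∨ ∃ n m : ℕ, x = ↑(Bruck.mk n (1 : Bicyclic k) m)} ∧
      (∀ x y : WithZero BicyclicNat, f (x * y) = f x * f y) ∧
      f 0 = 0 := by
  exact ⟨isClosed_bicyclicCopy hτ, fun _ hx _ hy => mul_mem_bicyclicCopy hx hy,
    bicyclicEmbedding _, bicyclicEmbedding_injective _, range_bicyclicEmbedding _, map_mul _, rfl⟩

/-- In any locally compact Hausdorff shift-continuous topology on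
`B⁰(B_k)`, the set `B = {(n,(0,0),m) : n, m ∈ ω} ∪ {0*}` is a closed subsemigroup,
isomorphic as a semigroup to the bicyclic monoid with adjoined zero, with `0*`
corresponding to the zero. -/
theorem closed_copy_of_bicyclic_with_zero (k : ℕ)
    [TopologicalSpace (BruckZero (Bicyclic k))] [T2Space (BruckZero (Bicyclic k))]
    [LocallyCompactSpace (BruckZero (Bicyclic k))]
    (hτ : ShiftContinuous (BruckZero (Bicyclic k))) :
    IsClosed {x : BruckZero (Bicyclic k) |
        x = 0 ∨ ∃ n m : ℕ, x = ↑(Bruck.mk n (1 : Bicyclic k) m)} ∧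
    (∀ x ∈ {x : BruckZero (Bicyclic k) |
        x = 0 ∨ ∃ n m : ℕ, x = ↑(Bruck.mk n (1 : Bicyclic k) m)},
      ∀ y ∈ {x : BruckZero (Bicyclic k) |
        x = 0 ∨ ∃ n m : ℕ, x = ↑(Bruck.mk n (1 : Bicyclic k) m)},
      x * y ∈ {x : BruckZero (Bicyclic k) |
        x = 0 ∨ ∃ n m : ℕ, x = ↑(Bruck.mk n (1 : Bicyclic k) m)}) ∧
    ∃ f : WithZero BicyclicNat → BruckZero (Bicyclic k),
      Function.Injective f ∧
      Set.range f = {x : BruckZero (Bicyclic k) |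
        x = 0 ∨ ∃ n m : ℕ, x = ↑(Bruck.mk n (1 : Bicyclic k) m)} ∧
      (∀ x y : WithZero BicyclicNat, f (x * y) = f x * f y) ∧
      f 0 = 0 :=
  closed_copy_of_bicyclic_with_zero_general k hτ
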